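/- arXiv:1809.05794 — 4 statements merged into one kernel-verified Lean document; each statement's English description precedes it below -/
import Mathlib

section
/- Let w̄ = (ᾱ, β̄, (ū^t, v̄^t)_{t∈T}) be a CGLP solution and suppose Ã contains the identity. Then there exists a set J ⊆ {1,…,q} with |J| = n such that the n×n submatrix Ã_J is nonsingular and ū^t_j = 0 for all j ∉ J and all t ∈ T, if and only if the submatrix Ã_{N(ū)} has full row rank, i.e., rank(Ã_{N(ū)}) = |N(ū)|. -/
/-
Since `Ã` contains the identity, its rows span `ℝⁿ`, so any linearly independent set of rows
extends, inside the rows of `Ã`, to a basis of `ℝⁿ`: `n` rows forming a nonsingular `Ã_J`.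
As `ū ≥ 0`, "`ū^t` vanishes off `J`" just says `N(ū) ⊆ J`, and full row rank of `Ã_{N(ū)}` is
linear independence of its rows, which passes to subsets.
-/

open Matrix

/-- Rank of the submatrix of `A` with rows indexed by `N`. -/
noncomputable def subRank {q n : ℕ} (A : Matrix (Fin q) (Fin n) ℝ) (N : Finset (Fin q)) : ℕ :=
  (A.submatrix (fun i : {x // x ∈ N} => (i : Fin q)) id).rank

open Classical in
/-- The support `N(u)` of a family of multipliers `u = (u^t)_{t ∈ T}`. -/
noncomputable def supp {q : ℕ} {T : Type} [Fintype T] (u : T → Fin q → ℝ) : Finset (Fin q) :=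
  Finset.univ.filter fun j => ∃ t, 0 < u t j

/-- `A` contains the identity: every standard basis row vector appears as a row of `A`. -/
def ContainsId {q n : ℕ} (A : Matrix (Fin q) (Fin n) ℝ) : Prop :=
  ∀ j : Fin n, ∃ i : Fin q, A i = Pi.single j 1

/-- A CGLP solution for the data `A, b, D, d`. -/
def IsCGLP {q n r : ℕ} {T : Type} [Fintype T]
    (A : Matrix (Fin q) (Fin n) ℝ) (b : Fin q → ℝ)
    (D : T → Matrix (Fin r) (Fin n) ℝ) (d : T → Fin r → ℝ)
    (α : Fin n → ℝ) (β : ℝ) (u : T → Fin q → ℝ) (v : T → Fin r → ℝ) : Prop :=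
  (∀ t, α = Matrix.vecMul (u t) A + Matrix.vecMul (v t) (D t)) ∧
  (∀ t, β = u t ⬝ᵥ b + v t ⬝ᵥ d t) ∧
  (∀ t j, 0 ≤ u t j) ∧ (∀ t i, 0 ≤ v t i) ∧
  (∑ t, (∑ j, u t j + ∑ i, v t i)) = 1

lemma subRank_eq_card_iff {q n : ℕ} (A : Matrix (Fin q) (Fin n) ℝ) (N : Finset (Fin q)) :
    subRank A N = N.card ↔ LinearIndepOn ℝ A.row (N : Set (Fin q)) := by
  rw [LinearIndepOn, linearIndependent_iff_card_eq_finrank_span, subRank,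
    rank_eq_finrank_span_row, Set.finrank, eq_comm]
  simp only [Finset.coe_sort_coe, Fintype.card_coe]
  rfl

lemma supp_subset_iff {q : ℕ} {T : Type} [Fintype T] {u : T → Fin q → ℝ}
    (hu : ∀ t j, 0 ≤ u t j) (J : Finset (Fin q)) :
    supp u ⊆ J ↔ ∀ t, ∀ j ∉ J, u t j = 0 := by
  simp only [Finset.subset_iff, supp, Finset.mem_filter, Finset.mem_univ, true_and]
  refine ⟨fun h t j hj => ?_, fun h j ⟨t, ht⟩ => ?_⟩
  · exact ((hu t j).eq_of_not_lt fun ht => hj (h ⟨t, ht⟩)).symm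
  · by_contra hj
    exact ht.ne' (h t j hj)

lemma ContainsId.span_rows_eq_top {q n : ℕ} {A : Matrix (Fin q) (Fin n) ℝ}
    (hA : ContainsId A) : Submodule.span ℝ (Set.range A.row) = ⊤ := by
  rw [eq_top_iff, ← (Pi.basisFun ℝ (Fin n)).span_eq]
  refine Submodule.span_mono ?_
  rintro _ ⟨j, rfl⟩
  obtain ⟨i, hi⟩ := hA j
  exact ⟨i, by rw [row_apply', hi, Pi.basisFun_apply]⟩

lemma exists_finset_superset_linearIndepOn_card_eq_finrank {K V ι : Type*} [DivisionRing K]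
    [AddCommGroup V] [Module K V] [Fintype ι] {v : ι → V}
    (hv : Submodule.span K (Set.range v) = ⊤) {s : Finset ι} (hs : LinearIndepOn K v (s : Set ι)) :
    ∃ J : Finset ι, s ⊆ J ∧ J.card = Module.finrank K V ∧ LinearIndepOn K v (J : Set ι) := by
  classical
  obtain ⟨b, -, hsb, hspan, hb⟩ := exists_linearIndepOn_extension hs (Set.subset_univ _)
  have hspan_top : Submodule.span K (v '' b) = ⊤ := by
    rw [eq_top_iff, ← hv, ← Set.image_univ]
    exact Submodule.span_le.2 hspan
  refine ⟨b.toFinset, by simpa using hsb, ?_, by simpa using hb⟩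
  have := finrank_span_eq_card (R := K) (b := fun i : b => v i) hb
  rw [← Set.image_eq_range, hspan_top, finrank_top] at this
  rw [this, Set.toFinset_card]

theorem stmt_0_general {q n r : ℕ} {T : Type} [Fintype T]
    (A : Matrix (Fin q) (Fin n) ℝ) (b : Fin q → ℝ)
    (D : T → Matrix (Fin r) (Fin n) ℝ) (d : T → Fin r → ℝ)
    (αbar : Fin n → ℝ) (βbar : ℝ) (ubar : T → Fin q → ℝ) (vbar : T → Fin r → ℝ)
    (hsol : IsCGLP A b D d αbar βbar ubar vbar)
    (hid : ContainsId A) :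
    (∃ J : Finset (Fin q), J.card = n ∧ subRank A J = n ∧
        ∀ t, ∀ j ∉ J, ubar t j = 0) ↔
      subRank A (supp ubar) = (supp ubar).card := by
  have hu : ∀ t j, 0 ≤ ubar t j := hsol.2.2.1
  rw [subRank_eq_card_iff]
  constructor
  · rintro ⟨J, hcard, hrank, hzero⟩
    have hJ : LinearIndepOn ℝ A.row (J : Set (Fin q)) :=
      (subRank_eq_card_iff A J).1 (hrank.trans hcard.symm)
    exact hJ.mono (Finset.coe_subset.2 ((supp_subset_iff hu J).2 hzero))
  · intro hsupp
    obtain ⟨J, hsJ, hcard, hJ⟩ :=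
      exists_finset_superset_linearIndepOn_card_eq_finrank hid.span_rows_eq_top hsupp
    rw [Module.finrank_fin_fun] at hcard
    exact ⟨J, hcard, hcard ▸ (subRank_eq_card_iff A J).2 hJ, (supp_subset_iff hu J).1 hsJ⟩

/-- For a CGLP solution `(ᾱ, β̄, (ū^t, v̄^t))` with `Ã` containing the
identity, there is a set `J` of `n` row indices with `Ã_J` nonsingular and all
multipliers `ū^t_j` vanishing outside `J`, if and only if the submatrix of `Ã`
on the rows in the support `N(ū)` has full row rank. -/
theorem stmt_0 {q n r : ℕ} {T : Type} [Fintype T] [Nonempty T]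
    (hq : 0 < q) (hn : 0 < n) (hr : 0 < r)
    (A : Matrix (Fin q) (Fin n) ℝ) (b : Fin q → ℝ)
    (D : T → Matrix (Fin r) (Fin n) ℝ) (d : T → Fin r → ℝ)
    (αbar : Fin n → ℝ) (βbar : ℝ) (ubar : T → Fin q → ℝ) (vbar : T → Fin r → ℝ)
    (hsol : IsCGLP A b D d αbar βbar ubar vbar)
    (hid : ContainsId A) :
    (∃ J : Finset (Fin q), J.card = n ∧ subRank A J = n ∧
        ∀ t, ∀ j ∉ J, ubar t j = 0) ↔
      subRank A (supp ubar) = (supp ubar).card :=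
  stmt_0_general A b D d αbar βbar ubar vbar hsol hid
end

section
/- Suppose Ã contains the identity. Let B be a finite nonempty set, let λ : B → ℝ satisfy λ_b > 0 for all b ∈ B and Σ_{b∈B} λ_b = 1, and for each b ∈ B and t ∈ T let u^{b,t} ∈ ℝ^q be nonnegative; define ū^t := Σ_{b∈B} λ_b u^{b,t} for each t ∈ T. If the rows of Ã indexed by N(ū) are linearly independent, then there exists a set J ⊆ {1,…,q} with |J| = n and Ã_J nonsingular such that N(u^b) ⊆ J for every b ∈ B, where u^b denotes the family (u^{b,t})_{t∈T}. -/
/-! Every support `N(u^b)` lies in `N(ū)`, since `ū` is a combination of nonnegative families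
with positive weights. The rows of `Ã` span `ℝⁿ` because `Ã` contains the identity, so the
independent rows indexed by `N(ū)` extend to `n` independent rows; these index the set `J`. -/

open Matrix

lemma mem_supp {q : ℕ} {T : Type} [Fintype T] (u : T → Fin q → ℝ) (j : Fin q) :
    j ∈ supp u ↔ ∃ t, 0 < u t j := by
  simp [supp]

lemma supp_subset_supp_of_eq_sum {q : ℕ} {T B : Type} [Fintype T] [Fintype B]
    (lam : B → ℝ) (hlam : ∀ b, 0 < lam b) (u : B → T → Fin q → ℝ) (hu : ∀ b t j, 0 ≤ u b t j)
    (ubar : T → Fin q → ℝ) (hubar : ∀ t j, ubar t j = ∑ b, lam b * u b t j) (b : B) :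
    supp (u b) ⊆ supp ubar := by
  intro j hj
  obtain ⟨t, ht⟩ := (mem_supp _ _).1 hj
  refine (mem_supp _ _).2 ⟨t, ?_⟩
  rw [hubar]
  exact Finset.sum_pos' (fun c _ => mul_nonneg (hlam c).le (hu c t j))
    ⟨b, Finset.mem_univ _, mul_pos (hlam b) ht⟩

lemma ContainsId.span_range_eq_top {q n : ℕ} {A : Matrix (Fin q) (Fin n) ℝ}
    (hid : ContainsId A) : Submodule.span ℝ (Set.range A) = ⊤ := by
  rw [eq_top_iff, ← (Pi.basisFun ℝ (Fin n)).span_eq, Submodule.span_le]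
  rintro _ ⟨j, rfl⟩
  obtain ⟨i, hi⟩ := hid j
  exact Submodule.subset_span ⟨i, by rw [hi, Pi.basisFun_apply]⟩

lemma LinearIndepOn.exists_finset_superset_card_eq_finrank {K V ι : Type*} [DivisionRing K]
    [AddCommGroup V] [Module K V] [FiniteDimensional K V] {v : ι → V}
    (hv : Submodule.span K (Set.range v) = ⊤) {s : Finset ι} (hs : LinearIndepOn K v ↑s) :
    ∃ J : Finset ι, s ⊆ J ∧ J.card = Module.finrank K V ∧ LinearIndepOn K v ↑J := by
  obtain ⟨b, -, hsb, hspan, hb⟩ := exists_linearIndepOn_extension hs (Set.subset_univ _)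
  lift b to Finset ι using hb.finite
  refine ⟨b, by exact_mod_cast hsb, ?_, hb⟩
  have hspan_b : Submodule.span K (Set.range fun x : (b : Set ι) => v x) = ⊤ := by
    rw [← Set.image_eq_range, eq_top_iff, ← hv, Submodule.span_le, ← Set.image_univ]
    exact hspan
  rw [← finrank_top K V, ← hspan_b, finrank_span_eq_card hb]
  simp

lemma subRank_eq_card_of_linearIndepOn {q n : ℕ} {A : Matrix (Fin q) (Fin n) ℝ}
    {J : Finset (Fin q)} (hJ : LinearIndepOn ℝ A ↑J) : subRank A J = J.card :=
  (LinearIndependent.rank_matrix hJ).trans (Fintype.card_coe J)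

theorem stmt_3_general {q n : ℕ} {T B : Type} [Fintype T] [Fintype B]
    (A : Matrix (Fin q) (Fin n) ℝ) (hid : ContainsId A)
    (lam : B → ℝ) (hlam : ∀ b, 0 < lam b)
    (u : B → T → Fin q → ℝ) (hu : ∀ b t j, 0 ≤ u b t j)
    (ubar : T → Fin q → ℝ) (hubar : ∀ t j, ubar t j = ∑ b, lam b * u b t j)
    (hli : LinearIndependent ℝ (fun i : {x // x ∈ supp ubar} => A i.val)) :
    ∃ J : Finset (Fin q), J.card = n ∧ subRank A J = n ∧ ∀ b, supp (u b) ⊆ J := by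
  obtain ⟨J, hSJ, hcard, hJ⟩ :=
    LinearIndepOn.exists_finset_superset_card_eq_finrank (s := supp ubar)
      hid.span_range_eq_top hli
  rw [Module.finrank_fin_fun] at hcard
  exact ⟨J, hcard, (subRank_eq_card_of_linearIndepOn hJ).trans hcard,
    fun b => (supp_subset_supp_of_eq_sum lam hlam u hu ubar hubar b).trans hSJ⟩

/-- Let `ū^t = Σ_b λ_b u^{b,t}` be a proper convex combination of
nonnegative multiplier families. If the rows of `Ã` indexed by `N(ū)` are linearly
independent, then there is a set `J` of `n` row indices with `Ã_J` nonsingular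
containing the support `N(u^b)` of every `b ∈ B`. -/
theorem stmt_3 {q n : ℕ} {T B : Type} [Fintype T] [Nonempty T] [Fintype B] [Nonempty B]
    (hq : 0 < q) (hn : 0 < n)
    (A : Matrix (Fin q) (Fin n) ℝ) (hid : ContainsId A)
    (lam : B → ℝ) (hlam : ∀ b, 0 < lam b) (hsum : ∑ b, lam b = 1)
    (u : B → T → Fin q → ℝ) (hu : ∀ b t j, 0 ≤ u b t j)
    (ubar : T → Fin q → ℝ) (hubar : ∀ t j, ubar t j = ∑ b, lam b * u b t j)
    (hli : LinearIndependent ℝ (fun i : {x // x ∈ supp ubar} => A i.val)) :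
    ∃ J : Finset (Fin q), J.card = n ∧ subRank A J = n ∧ ∀ b, supp (u b) ⊆ J :=
  stmt_3_general A hid lam hlam u hu ubar hubar hli
end

section
/- Let w̄ = (ᾱ, β̄, (ū^t, v̄^t)_{t∈T}) be a CGLP solution that is extended regular. Then the tuple (θ, δ, (u^t, v^t)_{t∈T}) with θ = 1, δ ∈ {0,1}^q the indicator vector of N(ū), u^t = ū^t and v^t = v̄^t for all t ∈ T, is an RCV solution for (ᾱ, β̄). Consequently, since θ ≤ 1 for every RCV solution, the maximum value of θ over RCV solutions for (ᾱ, β̄) equals 1. -/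
open Matrix

/-- An extended regular CGLP solution: a CGLP solution whose submatrix of `A` on the
rows in the support `N(u)` has full row rank. -/
noncomputable def IsExtReg {q n r : ℕ} {T : Type} [Fintype T]
    (A : Matrix (Fin q) (Fin n) ℝ) (b : Fin q → ℝ)
    (D : T → Matrix (Fin r) (Fin n) ℝ) (d : T → Fin r → ℝ)
    (α : Fin n → ℝ) (β : ℝ) (u : T → Fin q → ℝ) (v : T → Fin r → ℝ) : Prop :=
  IsCGLP A b D d α β u v ∧ subRank A (supp u) = (supp u).card

/-- An RCV solution for the cut `(ᾱ, β̄)`. -/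
def IsRCV {q n r : ℕ} {T : Type} [Fintype T]
    (A : Matrix (Fin q) (Fin n) ℝ) (b : Fin q → ℝ)
    (D : T → Matrix (Fin r) (Fin n) ℝ) (d : T → Fin r → ℝ)
    (αbar : Fin n → ℝ) (βbar : ℝ)
    (θ : ℝ) (δ : Fin q → ℝ) (u : T → Fin q → ℝ) (v : T → Fin r → ℝ) : Prop :=
  0 ≤ θ ∧ θ ≤ 1 ∧ (∀ j, δ j = 0 ∨ δ j = 1) ∧
  (∀ t j, 0 ≤ u t j) ∧ (∀ t i, 0 ≤ v t i) ∧
  (∀ t, θ • αbar = Matrix.vecMul (u t) A + Matrix.vecMul (v t) (D t)) ∧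
  (∀ t, θ * βbar = u t ⬝ᵥ b + v t ⬝ᵥ d t) ∧
  (∀ t j, u t j ≤ δ j) ∧
  (∑ j, δ j) ≤ (n : ℝ) ∧
  (∀ N : Finset (Fin q), ∑ j ∈ N, δ j ≤ (subRank A N : ℝ))

/-! The normalization bounds each `ū^t_j` by `1`, so `ū^t ≤ 1_{N(ū)}`. The only nontrivial
constraint, `|N ∩ N(ū)| ≤ rank A_N`, holds because the rows of `A` indexed by `N ∩ N(ū)` are a
subfamily of the linearly independent rows indexed by `N(ū)`. -/

section SubRank

variable {q n : ℕ} (A : Matrix (Fin q) (Fin n) ℝ)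

lemma subRank_eq_finrank_span_rows (N : Finset (Fin q)) :
    subRank A N = Module.finrank ℝ (Submodule.span ℝ (Set.range fun i : N => A i)) := by
  rw [subRank, Matrix.rank_eq_finrank_span_row]
  rfl

lemma subRank_le_width (N : Finset (Fin q)) : subRank A N ≤ n := by
  simpa [subRank] using (A.submatrix (fun i : N => (i : Fin q)) id).rank_le_card_width

lemma subRank_mono {M N : Finset (Fin q)} (h : M ⊆ N) : subRank A M ≤ subRank A N := by
  rw [subRank_eq_finrank_span_rows, subRank_eq_finrank_span_rows]
  refine Submodule.finrank_mono (Submodule.span_mono ?_)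
  rintro _ ⟨i, rfl⟩
  exact ⟨⟨i, h i.2⟩, rfl⟩

lemma subRank_eq_card_iff_linearIndependent (N : Finset (Fin q)) :
    subRank A N = N.card ↔ LinearIndependent ℝ fun i : N => A i := by
  rw [linearIndependent_iff_card_eq_finrank_span, Set.finrank, subRank_eq_finrank_span_rows,
    Fintype.card_coe, eq_comm]

lemma subRank_eq_card_of_subset {M S : Finset (Fin q)} (hS : subRank A S = S.card)
    (hM : M ⊆ S) : subRank A M = M.card := by
  rw [subRank_eq_card_iff_linearIndependent] at hS ⊢
  exact hS.comp (fun i : M => (⟨i, hM i.2⟩ : S))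
    fun _ _ h => Subtype.ext (congrArg Subtype.val h :)

end SubRank

section Indicator

variable {q : ℕ} {T : Type} [Fintype T]

lemma indicator_supp_eq_zero_or_one (u : T → Fin q → ℝ) (j : Fin q) :
    (if j ∈ supp u then (1 : ℝ) else 0) = 0 ∨ (if j ∈ supp u then (1 : ℝ) else 0) = 1 := by
  split_ifs <;> simp

lemma sum_indicator_supp (u : T → Fin q → ℝ) (N : Finset (Fin q)) :
    ∑ j ∈ N, (if j ∈ supp u then (1 : ℝ) else 0) = (N ∩ supp u).card := by
  simp [Finset.sum_ite_mem]

lemma le_indicator_supp {u : T → Fin q → ℝ} (h_le_one : ∀ t j, u t j ≤ 1) (t : T)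
    (j : Fin q) : u t j ≤ if j ∈ supp u then 1 else 0 := by
  split_ifs with hj
  · exact h_le_one t j
  · simp only [supp, Finset.mem_filter, Finset.mem_univ, true_and, not_exists, not_lt] at hj
    exact hj t

end Indicator

section Solutions

variable {q n r : ℕ} {T : Type} [Fintype T]
  {A : Matrix (Fin q) (Fin n) ℝ} {b : Fin q → ℝ}
  {D : T → Matrix (Fin r) (Fin n) ℝ} {d : T → Fin r → ℝ}
  {α : Fin n → ℝ} {β : ℝ} {u : T → Fin q → ℝ} {v : T → Fin r → ℝ}

lemma IsCGLP.u_le_one (h : IsCGLP A b D d α β u v) (t : T) (j : Fin q) : u t j ≤ 1 := by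
  obtain ⟨-, -, hu, hv, hnorm⟩ := h
  have hweight_nonneg : ∀ t, 0 ≤ ∑ j, u t j + ∑ i, v t i := fun t =>
    add_nonneg (Finset.sum_nonneg fun j _ => hu t j) (Finset.sum_nonneg fun i _ => hv t i)
  calc u t j ≤ ∑ j, u t j := Finset.single_le_sum (fun j _ => hu t j) (Finset.mem_univ j)
    _ ≤ ∑ j, u t j + ∑ i, v t i :=
        le_add_of_nonneg_right (Finset.sum_nonneg fun i _ => hv t i)
    _ ≤ ∑ t, (∑ j, u t j + ∑ i, v t i) :=
        Finset.single_le_sum (fun t _ => hweight_nonneg t) (Finset.mem_univ t)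
    _ = 1 := hnorm

lemma IsExtReg.isRCV (h : IsExtReg A b D d α β u v) :
    IsRCV A b D d α β 1 (fun j => if j ∈ supp u then (1 : ℝ) else 0) u v := by
  obtain ⟨hcglp, hrank⟩ := h
  obtain ⟨hα, hβ, hu, hv, -⟩ := id hcglp
  refine ⟨zero_le_one, le_rfl, indicator_supp_eq_zero_or_one u, hu, hv,
    fun t => (one_smul ℝ α).trans (hα t), fun t => (one_mul β).trans (hβ t),
    le_indicator_supp hcglp.u_le_one, ?_, fun N => ?_⟩
  · rw [sum_indicator_supp, Finset.univ_inter, ← hrank]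
    exact_mod_cast subRank_le_width A (supp u)
  · rw [sum_indicator_supp, ← subRank_eq_card_of_subset A hrank Finset.inter_subset_right]
    exact_mod_cast subRank_mono A Finset.inter_subset_left

end Solutions

theorem stmt_6_general {q n r : ℕ} {T : Type} [Fintype T]
    (A : Matrix (Fin q) (Fin n) ℝ) (b : Fin q → ℝ)
    (D : T → Matrix (Fin r) (Fin n) ℝ) (d : T → Fin r → ℝ)
    (αbar : Fin n → ℝ) (βbar : ℝ) (ubar : T → Fin q → ℝ) (vbar : T → Fin r → ℝ)
    (hreg : IsExtReg A b D d αbar βbar ubar vbar) :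
    IsRCV A b D d αbar βbar 1 (fun j => if j ∈ supp ubar then (1 : ℝ) else 0) ubar vbar ∧
      IsGreatest {θ : ℝ | ∃ δ u v, IsRCV A b D d αbar βbar θ δ u v} 1 :=
  ⟨hreg.isRCV, ⟨_, _, _, hreg.isRCV⟩, fun _ ⟨_, _, _, hθ⟩ => hθ.2.1⟩

/-- An extended regular CGLP solution `(ᾱ, β̄, (ū^t, v̄^t))` yields the
RCV solution `(1, 1_{N(ū)}, (ū^t, v̄^t))` for `(ᾱ, β̄)`; consequently the maximum of
`θ` over all RCV solutions for `(ᾱ, β̄)` equals `1`. -/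
theorem stmt_6 {q n r : ℕ} {T : Type} [Fintype T] [Nonempty T]
    (hq : 0 < q) (hn : 0 < n) (hr : 0 < r)
    (A : Matrix (Fin q) (Fin n) ℝ) (b : Fin q → ℝ)
    (D : T → Matrix (Fin r) (Fin n) ℝ) (d : T → Fin r → ℝ)
    (αbar : Fin n → ℝ) (βbar : ℝ) (ubar : T → Fin q → ℝ) (vbar : T → Fin r → ℝ)
    (hreg : IsExtReg A b D d αbar βbar ubar vbar) :
    IsRCV A b D d αbar βbar 1 (fun j => if j ∈ supp ubar then (1 : ℝ) else 0) ubar vbar ∧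
      IsGreatest {θ : ℝ | ∃ δ u v, IsRCV A b D d αbar βbar θ δ u v} 1 :=
  stmt_6_general A b D d αbar βbar ubar vbar hreg
end

section
/- Suppose (ᾱ, β̄) ≠ (0, 0) and let (θ, δ, (u^t, v^t)_{t∈T}) be an RCV solution for (ᾱ, β̄) with θ > 0. Then σ := Σ_{t∈T}(Σ_{i=1}^q u^t_i + Σ_{i=1}^r v^t_i) > 0, and the tuple ((θ/σ)ᾱ, (θ/σ)β̄, ((1/σ)u^t, (1/σ)v^t)_{t∈T}) is an extended regular CGLP solution. In particular there exist μ > 0 and an extended regular CGLP solution whose (α, β)-component equals (μᾱ, μβ̄). -/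
open Matrix

/-!
Dividing an RCV solution by its total multiplier mass `σ` produces the normalization of a
CGLP solution and only rescales the cut, so the content lies in `σ > 0` and in regularity.
If `σ = 0` then every multiplier vanishes and `θ • (ᾱ, β̄) = 0`, impossible for `θ > 0`.
On the support of `u` the binary `δ` must equal `1`, so the rank constraint of the RCV
formulation for `N = N(u)` reads `|N(u)| ≤ rank Ã_{N(u)}`; the reverse inequality always holds.
-/

theorem supp_smul_of_pos {q : ℕ} {T : Type} [Fintype T] (u : T → Fin q → ℝ) {c : ℝ}
    (hc : 0 < c) : supp (fun t => c • u t) = supp u := by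
  ext j
  simp [supp, smul_eq_mul, mul_pos_iff_of_pos_left hc]

theorem subRank_le_card {q n : ℕ} (A : Matrix (Fin q) (Fin n) ℝ) (N : Finset (Fin q)) :
    subRank A N ≤ N.card :=
  (rank_le_card_height _).trans_eq (Fintype.card_coe N)

namespace IsRCV

variable {q n r : ℕ} {T : Type} [Fintype T]
  {A : Matrix (Fin q) (Fin n) ℝ} {b : Fin q → ℝ}
  {D : T → Matrix (Fin r) (Fin n) ℝ} {d : T → Fin r → ℝ}
  {αbar : Fin n → ℝ} {βbar : ℝ} {θ : ℝ} {δ : Fin q → ℝ}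
  {u : T → Fin q → ℝ} {v : T → Fin r → ℝ}

theorem delta_eq_one_of_mem_supp (h : IsRCV A b D d αbar βbar θ δ u v) {j : Fin q}
    (hj : j ∈ supp u) : δ j = 1 := by
  obtain ⟨-, -, hδ, -, -, -, -, huδ, -⟩ := h
  obtain ⟨t, ht⟩ := (Finset.mem_filter.1 hj).2
  exact (hδ j).resolve_left (ht.trans_le (huδ t j)).ne'

theorem subRank_supp_eq_card (h : IsRCV A b D d αbar βbar θ δ u v) :
    subRank A (supp u) = (supp u).card := by
  refine (subRank_le_card A _).antisymm ?_
  have hrank : ∑ j ∈ supp u, δ j ≤ (subRank A (supp u) : ℝ) := h.2.2.2.2.2.2.2.2.2 (supp u)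
  rw [Finset.sum_congr rfl fun j hj => h.delta_eq_one_of_mem_supp hj,
    Finset.sum_const, nsmul_one] at hrank
  exact_mod_cast hrank

theorem total_pos [Nonempty T] (h : IsRCV A b D d αbar βbar θ δ u v) (hθ : 0 < θ)
    (hne : ¬ (αbar = 0 ∧ βbar = 0)) : 0 < ∑ t, (∑ j, u t j + ∑ i, v t i) := by
  obtain ⟨-, -, -, hu, hv, hα, hβ, -⟩ := h
  have hu_sum t : 0 ≤ ∑ j, u t j := Finset.sum_nonneg fun j _ => hu t j
  have hv_sum t : 0 ≤ ∑ i, v t i := Finset.sum_nonneg fun i _ => hv t i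
  refine (Finset.sum_nonneg fun t _ => add_nonneg (hu_sum t) (hv_sum t)).lt_of_ne
    fun htotal => hne ?_
  obtain ⟨t⟩ := ‹Nonempty T›
  have hrow : ∑ j, u t j + ∑ i, v t i = 0 :=
    (Finset.sum_eq_zero_iff_of_nonneg fun t _ => add_nonneg (hu_sum t) (hv_sum t)).1
      htotal.symm t (Finset.mem_univ t)
  obtain ⟨hu0, hv0⟩ := (add_eq_zero_iff_of_nonneg (hu_sum t) (hv_sum t)).1 hrow
  have hut : u t = 0 := funext fun j =>
    (Finset.sum_eq_zero_iff_of_nonneg fun j _ => hu t j).1 hu0 j (Finset.mem_univ j)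
  have hvt : v t = 0 := funext fun i =>
    (Finset.sum_eq_zero_iff_of_nonneg fun i _ => hv t i).1 hv0 i (Finset.mem_univ i)
  have hαt := hα t
  have hβt := hβ t
  simp only [hut, hvt, zero_vecMul, zero_dotProduct, add_zero, smul_eq_zero,
    mul_eq_zero, hθ.ne', false_or] at hαt hβt
  exact ⟨hαt, hβt⟩

theorem isCGLP_div (h : IsRCV A b D d αbar βbar θ δ u v) {σ : ℝ}
    (hσ : σ = ∑ t, (∑ j, u t j + ∑ i, v t i)) (hσ0 : 0 < σ) :
    IsCGLP A b D d ((θ / σ) • αbar) ((θ / σ) * βbar)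
      (fun t => (1 / σ) • u t) (fun t => (1 / σ) • v t) := by
  obtain ⟨-, -, -, hu, hv, hα, hβ, -⟩ := h
  refine ⟨fun t => ?_, fun t => ?_, fun t j => ?_, fun t i => ?_, ?_⟩
  · rw [smul_vecMul, smul_vecMul, ← smul_add, ← hα t, smul_smul, one_div_mul_eq_div]
  · rw [smul_dotProduct, smul_dotProduct, smul_eq_mul, smul_eq_mul, ← mul_add, ← hβ t]
    ring
  · exact mul_nonneg (one_div_nonneg.2 hσ0.le) (hu t j)
  · exact mul_nonneg (one_div_nonneg.2 hσ0.le) (hv t i)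
  · simp only [Pi.smul_apply, smul_eq_mul, ← Finset.mul_sum, ← mul_add, ← hσ]
    exact one_div_mul_cancel hσ0.ne'

end IsRCV

theorem stmt_7_general {q n r : ℕ} {T : Type} [Fintype T] [Nonempty T]
    (A : Matrix (Fin q) (Fin n) ℝ) (b : Fin q → ℝ)
    (D : T → Matrix (Fin r) (Fin n) ℝ) (d : T → Fin r → ℝ)
    (αbar : Fin n → ℝ) (βbar : ℝ)
    (hne : ¬ (αbar = 0 ∧ βbar = 0))
    (θ : ℝ) (δ : Fin q → ℝ) (u : T → Fin q → ℝ) (v : T → Fin r → ℝ)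
    (hrcv : IsRCV A b D d αbar βbar θ δ u v) (hθ : 0 < θ)
    (σ : ℝ) (hσ : σ = ∑ t, (∑ j, u t j + ∑ i, v t i)) :
    0 < σ ∧
      IsExtReg A b D d ((θ / σ) • αbar) ((θ / σ) * βbar)
        (fun t => (1 / σ) • u t) (fun t => (1 / σ) • v t) ∧
      ∃ μ : ℝ, 0 < μ ∧ ∃ u' : T → Fin q → ℝ, ∃ v' : T → Fin r → ℝ,
        IsExtReg A b D d (μ • αbar) (μ * βbar) u' v' := by
  have hσ0 : 0 < σ := hσ ▸ hrcv.total_pos hθ hne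
  have hext : IsExtReg A b D d ((θ / σ) • αbar) ((θ / σ) * βbar)
      (fun t => (1 / σ) • u t) (fun t => (1 / σ) • v t) :=
    ⟨hrcv.isCGLP_div hσ hσ0, by
      rw [supp_smul_of_pos u (one_div_pos.2 hσ0)]
      exact hrcv.subRank_supp_eq_card⟩
  exact ⟨hσ0, hext, θ / σ, div_pos hθ hσ0, _, _, hext⟩

/-- If `(ᾱ, β̄) ≠ (0, 0)` and `(θ, δ, (u^t, v^t))` is an RCV solution for
`(ᾱ, β̄)` with `θ > 0`, then `σ := Σ_t (Σ_i u^t_i + Σ_i v^t_i) > 0` and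
`((θ/σ)ᾱ, (θ/σ)β̄, ((1/σ)u^t, (1/σ)v^t))` is an extended regular CGLP solution;
in particular some positive multiple `(μᾱ, μβ̄)` is the cut of an extended regular
CGLP solution. -/
theorem stmt_7 {q n r : ℕ} {T : Type} [Fintype T] [Nonempty T]
    (hq : 0 < q) (hn : 0 < n) (hr : 0 < r)
    (A : Matrix (Fin q) (Fin n) ℝ) (b : Fin q → ℝ)
    (D : T → Matrix (Fin r) (Fin n) ℝ) (d : T → Fin r → ℝ)
    (αbar : Fin n → ℝ) (βbar : ℝ)
    (hne : ¬ (αbar = 0 ∧ βbar = 0))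
    (θ : ℝ) (δ : Fin q → ℝ) (u : T → Fin q → ℝ) (v : T → Fin r → ℝ)
    (hrcv : IsRCV A b D d αbar βbar θ δ u v) (hθ : 0 < θ)
    (σ : ℝ) (hσ : σ = ∑ t, (∑ j, u t j + ∑ i, v t i)) :
    0 < σ ∧
      IsExtReg A b D d ((θ / σ) • αbar) ((θ / σ) * βbar)
        (fun t => (1 / σ) • u t) (fun t => (1 / σ) • v t) ∧
      ∃ μ : ℝ, 0 < μ ∧ ∃ u' : T → Fin q → ℝ, ∃ v' : T → Fin r → ℝ,
        IsExtReg A b D d (μ • αbar) (μ * βbar) u' v' :=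
  stmt_7_general A b D d αbar βbar hne θ δ u v hrcv hθ σ hσ
end
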